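/- Let G be an elementary enhanced 2-group (all nonzero elements of order 2, with odd quadratic refinement) that is not isomorphic to n⟨1/2⟩ for n ≤ 3. Then there exists v ∈ G with q(v) = −1/2 in Q/2Z. If moreover G ≠ ⟨−1/2⟩, such v can be chosen non-characteristic. -/

import Mathlib

/-- The doubling map `ℚ/ℤ → ℚ/2ℤ` induced by multiplication by `2`. -/
noncomputable def dbl : AddCircle (1 : ℚ) ≃+ AddCircle (2 : ℚ) :=
  AddCircle.equivAddCircle (1 : ℚ) (2 : ℚ) one_ne_zero two_ne_zero

/-- The natural reduction map `ℚ/2ℤ → ℚ/ℤ`. -/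
def redmap : AddCircle (2 : ℚ) →+ AddCircle (1 : ℚ) :=
  QuotientAddGroup.map (AddSubgroup.zmultiples (2 : ℚ)) (AddSubgroup.zmultiples (1 : ℚ))
    (AddMonoidHom.id ℚ) (by
      intro x hx
      obtain ⟨k, hk⟩ := AddSubgroup.mem_zmultiples_iff.mp hx
      rw [AddSubgroup.mem_comap]
      refine AddSubgroup.mem_zmultiples_iff.mpr ⟨2 * k, ?_⟩
      simp only [AddMonoidHom.id_apply]
      rw [← hk]
      simp [zsmul_eq_mul]
      ring)

/-!
Since `G` is elementary, `b` takes values in `½ℤ/ℤ ≅ ZMod 2` and `q` in `½ℤ/2ℤ ≅ ZMod 4`.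
Writing `b = β/2` and `q = κ/2`, everything becomes arithmetic in `ZMod 4`, and an orthogonal
family `aᵢ` with `β aᵢ aᵢ = 1` and trivial joint orthogonal complement gives `G ≅ ⊕ ⟨κ(aᵢ)/2⟩`.

If no `v` has `κ v = 3`, take `κ x₁ = 1`. Every nonzero `y ⊥ x₁` has `κ y = 1`: `κ y = 2` would
make `κ (x₁ + y) = 3`, and `κ y = 0` would make `κ (y + z) ∈ {2, 3}` for any `z ⊥ x₁` with
`β y z = 1`. Two distinct such `y, y'` would give `κ (y + y') ∈ {0, 2}`, so `G ≅ n⟨1/2⟩`, `n ≤ 2`.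

If every `v` with `κ v = 3` is characteristic, such `v` is unique, since characteristic elements
differ by an element of the radical. Hence every nonzero `y ⊥ v` has `κ y = 2`: it is even as `v` is
characteristic, and `κ y = 0` would make `κ (v + y) = 3`. Distinct such `y, z` then satisfy
`β y z = 1`. So `v^⊥` is `0`, giving
`G ≅ ⟨-1/2⟩`; or `{0, y}`, putting `y` in the radical; or `{0, y, z, y + z}`, and then
`v + y, v + z, v + y + z` is an orthonormal basis, giving `G ≅ 3⟨1/2⟩`.
-/

namespace ZMod

/-- `j ↦ j/2`, identifying `ZMod n` with the `n`-torsion of `ℚ/pℤ` when `n = 2p`. -/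
def halfHom (n : ℕ) {p : ℚ} (hp : (n : ℚ) = 2 * p) : ZMod n →+ AddCircle p :=
  lift n ⟨zmultiplesHom _ ((1 / 2 : ℚ) : AddCircle p), by
    rw [zmultiplesHom_apply, ← AddCircle.coe_zsmul, AddCircle.coe_eq_zero_iff]
    exact ⟨1, by rw [one_zsmul, natCast_zsmul, nsmul_eq_mul, hp]; ring⟩⟩

variable {n : ℕ} {p : ℚ} (hp : (n : ℚ) = 2 * p)

lemma halfHom_intCast (m : ℤ) : halfHom n hp m = ((m / 2 : ℚ) : AddCircle p) := by
  rw [halfHom, lift_coe, zmultiplesHom_apply, ← AddCircle.coe_zsmul, zsmul_eq_mul]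
  ring_nf

lemma halfHom_injective [NeZero n] : Function.Injective (halfHom n hp) := by
  have hn : (0 : ℚ) < n := Nat.cast_pos.2 (NeZero.pos n)
  have : Fact (0 < p) := ⟨by linarith⟩
  have hmem (j : ZMod n) : ((j.val : ℤ) / 2 : ℚ) ∈ Set.Ico 0 (0 + p) :=
    ⟨by positivity, by
      have : (j.val : ℚ) < n := by exact_mod_cast j.val_lt
      push_cast; linarith⟩
  intro j k hjk
  rw [← natCast_zmod_val j, ← natCast_zmod_val k, ← Int.cast_natCast, ← Int.cast_natCast k.val,
    halfHom_intCast, halfHom_intCast, AddCircle.coe_eq_coe_iff_of_mem_Ico (hmem j) (hmem k)] at hjk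
  push_cast at hjk
  exact val_injective n (by exact_mod_cast (by linarith : (j.val : ℚ) = k.val))

lemma exists_halfHom_eq [NeZero n] {s : AddCircle p} (hs : n • s = 0) :
    ∃ j, halfHom n hp j = s := by
  obtain ⟨r, rfl⟩ := QuotientAddGroup.mk_surjective s
  obtain ⟨m, hm⟩ := (AddCircle.coe_eq_zero_iff p).1 ((AddCircle.coe_nsmul (p := p)).symm.trans hs)
  have hn : (0 : ℚ) < n := Nat.cast_pos.2 (NeZero.pos n)
  refine ⟨m, ?_⟩
  rw [halfHom_intCast]
  simp only [nsmul_eq_mul, hp, zsmul_eq_mul] at hm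
  have hm : (m : ℚ) = 2 * r := mul_right_cancel₀ (by linarith : p ≠ 0) (by linarith)
  rw [hm, mul_div_cancel_left₀ r two_ne_zero]

end ZMod

lemma ZMod.eq_one_of_ne_zero {t : ZMod 2} (h : t ≠ 0) : t = 1 := by
  revert t
  decide

abbrev red : ZMod 4 →+* ZMod 2 := ZMod.castHom (by norm_num) _

def half₂ : ZMod 2 →+ AddCircle (1 : ℚ) := ZMod.halfHom 2 (by norm_num)

def half₄ : ZMod 4 →+ AddCircle (2 : ℚ) := ZMod.halfHom 4 (by norm_num)

lemma half₂_injective : Function.Injective half₂ := ZMod.halfHom_injective _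

lemma half₄_injective : Function.Injective half₄ := ZMod.halfHom_injective _

lemma half₂_intCast (m : ℤ) : half₂ m = ((m / 2 : ℚ) : AddCircle (1 : ℚ)) :=
  ZMod.halfHom_intCast _ m

lemma half₄_intCast (m : ℤ) : half₄ m = ((m / 2 : ℚ) : AddCircle (2 : ℚ)) :=
  ZMod.halfHom_intCast _ m

lemma dbl_half₂ (t : ZMod 2) : dbl (half₂ t) = half₄ (2 * t.val) := by
  by_cases ht : t = 0
  · simp [ht]
  · have h₂ : half₂ 1 = ((1 / 2 : ℚ) : AddCircle (1 : ℚ)) := by simpa using half₂_intCast 1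
    have h₄ : half₄ 2 = ((1 : ℚ) : AddCircle (2 : ℚ)) := by simpa using half₄_intCast 2
    rw [ZMod.eq_one_of_ne_zero ht, h₂, show (2 : ZMod 4) * ((1 : ZMod 2).val : ZMod 4) = 2 from rfl,
      h₄, dbl, AddCircle.equivAddCircle_apply_mk]
    norm_num

lemma redmap_half₄ (k : ZMod 4) : redmap (half₄ k) = half₂ (red k) := by
  obtain ⟨m, rfl⟩ := ZMod.intCast_surjective k
  rw [half₄_intCast, map_intCast, half₂_intCast]
  rfl

lemma half₄_one : half₄ 1 = ((1 / 2 : ℚ) : AddCircle (2 : ℚ)) := by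
  simpa using half₄_intCast 1

lemma half₄_three : half₄ 3 = ((-(1 / 2) : ℚ) : AddCircle (2 : ℚ)) := by
  rw [show (3 : ZMod 4) = ((-1 : ℤ) : ZMod 4) by decide, half₄_intCast]
  norm_num

lemma exists_half₄_eq_intCast {k : ZMod 4} (hk : red k = 0) :
    ∃ m : ℤ, half₄ k = ((m : ℚ) : AddCircle (2 : ℚ)) := by
  obtain ⟨m, rfl⟩ := ZMod.intCast_surjective k
  rw [map_intCast, ZMod.intCast_zmod_eq_zero_iff_dvd] at hk
  obtain ⟨j, rfl⟩ := hk
  exact ⟨j, by rw [half₄_intCast]; push_cast; ring_nf⟩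

/-- An elementary enhanced 2-group `(G, b, q)` in coordinates: `b = β/2 ∈ ℚ/ℤ` and
`q = κ/2 ∈ ℚ/2ℤ`. Nondegeneracy of `β` forces `G` to be elementary. -/
structure EnhancedForm (G : Type*) [AddCommGroup G] where
  β : G → G → ZMod 2
  κ : G → ZMod 4
  β_add_left : ∀ x y z, β (x + y) z = β x z + β y z
  β_comm : ∀ x y, β x y = β y x
  β_nondegenerate : ∀ x, (∀ y, β x y = 0) → x = 0
  κ_add : ∀ x y, κ (x + y) = κ x + κ y + 2 * (β x y).val

namespace EnhancedForm

variable {G : Type*} [AddCommGroup G]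

lemma add_self (E : EnhancedForm G) (x : G) : x + x = 0 :=
  E.β_nondegenerate _ fun y => by rw [E.β_add_left, CharTwo.add_self_eq_zero]

lemma add_eq_zero_iff (E : EnhancedForm G) {x y : G} : x + y = 0 ↔ x = y := by
  rw [add_eq_zero_iff_eq_neg, neg_eq_of_add_eq_zero_left (E.add_self y)]

variable (E : EnhancedForm G)

lemma β_add_right (x y z : G) : E.β x (y + z) = E.β x y + E.β x z := by
  rw [E.β_comm, E.β_add_left, E.β_comm y, E.β_comm z]

@[simp] lemma β_zero_left (y : G) : E.β 0 y = 0 := by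
  simpa using E.β_add_left 0 0 y

@[simp] lemma β_zero_right (x : G) : E.β x 0 = 0 := by
  rw [E.β_comm, β_zero_left]

@[simp] lemma κ_zero : E.κ 0 = 0 := by
  simpa using E.κ_add 0 0

lemma κ_add_of_β_eq_zero {x y : G} (h : E.β x y = 0) : E.κ (x + y) = E.κ x + E.κ y := by
  simp [E.κ_add, h]

lemma κ_add_of_β_eq_one {x y : G} (h : E.β x y = 1) : E.κ (x + y) = E.κ x + E.κ y + 2 := by
  rw [E.κ_add, h, show ((1 : ZMod 2).val : ZMod 4) = 1 from rfl, mul_one]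

lemma β_self (x : G) : E.β x x = red (E.κ x) := by
  have h := E.κ_add x x
  rw [E.add_self, κ_zero] at h
  revert h
  generalize E.κ x = k
  generalize E.β x x = t
  revert k t
  decide

lemma exists_β_eq_one {x : G} (hx : x ≠ 0) : ∃ y, E.β x y = 1 := by
  by_contra! h
  exact hx (E.β_nondegenerate x fun y => by_contra fun h0 => h y (ZMod.eq_one_of_ne_zero h0))

/-- `E ≅ n⟨c/2⟩`. -/
def IsDiagonal (n : ℕ) (c : ZMod 4) : Prop :=
  ∃ e : G ≃+ (Fin n → ZMod 2), ∀ x, E.κ x = ∑ i, if e x i = 0 then 0 else c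

section OrthogonalBasis

variable {n : ℕ} (a : Fin n → G)

def IsOrthonormal : Prop :=
  (Pairwise fun i j => E.β (a i) (a j) = 0) ∧ ∀ i, E.β (a i) (a i) = 1

def coord : G →+ (Fin n → ZMod 2) :=
  AddMonoidHom.mk' (fun x i => E.β (a i) x) fun _ _ => funext fun _ => E.β_add_right _ _ _

variable {E a}

lemma coord_sum (ha : E.IsOrthonormal a) (S : Finset (Fin n)) :
    E.coord a (∑ i ∈ S, a i) = fun j => if j ∈ S then 1 else 0 := by
  have hβ (i j : Fin n) : E.β (a j) (a i) = if j = i then 1 else 0 := by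
    split_ifs with h
    · exact h ▸ ha.2 j
    · exact ha.1 h
  funext j
  simp only [map_sum, Finset.sum_apply, coord, AddMonoidHom.mk'_apply, hβ, Finset.sum_ite_eq]

lemma κ_sum (ha : E.IsOrthonormal a) (S : Finset (Fin n)) :
    E.κ (∑ i ∈ S, a i) = ∑ i ∈ S, E.κ (a i) := by
  induction S using Finset.cons_induction with
  | empty => simp
  | cons i S hi ih =>
    have h : E.β (a i) (∑ j ∈ S, a j) = 0 := (congrFun (coord_sum ha S) i).trans (if_neg hi)
    rw [Finset.sum_cons, Finset.sum_cons, E.κ_add_of_β_eq_zero h, ih]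

lemma coord_sum_support (ha : E.IsOrthonormal a) (t : Fin n → ZMod 2) :
    E.coord a (∑ i with t i ≠ 0, a i) = t := by
  rw [coord_sum ha]
  funext j
  by_cases h : t j = 0
  · simp [h]
  · rw [if_pos (by simpa using h), ZMod.eq_one_of_ne_zero h]

theorem exists_addEquiv_of_isOrthonormal (ha : E.IsOrthonormal a)
    (hspan : ∀ x, (∀ i, E.β (a i) x = 0) → x = 0) :
    ∃ e : G ≃+ (Fin n → ZMod 2), ∀ x, E.κ x = ∑ i, if e x i = 0 then 0 else E.κ (a i) := by
  have hinj : Function.Injective (E.coord a) :=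
    (injective_iff_map_eq_zero _).2 fun x hx => hspan x (congrFun hx)
  have hsurj : Function.Surjective (E.coord a) := fun t => ⟨_, coord_sum_support ha t⟩
  refine ⟨AddEquiv.ofBijective _ ⟨hinj, hsurj⟩, fun x => ?_⟩
  have hx : x = ∑ i with E.coord a x i ≠ 0, a i := hinj (coord_sum_support ha _).symm
  conv_lhs => rw [hx]
  rw [κ_sum ha, Finset.sum_filter]
  simp only [ite_not]
  rfl

end OrthogonalBasis

lemma isDiagonal_of_orthogonal {n : ℕ} {c : ZMod 4} (hc : red c = 1) (a : Fin n → G)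
    (horth : Pairwise fun i j => E.β (a i) (a j) = 0) (hκ : ∀ i, E.κ (a i) = c)
    (hspan : ∀ x, (∀ i, E.β (a i) x = 0) → x = 0) : E.IsDiagonal n c := by
  obtain ⟨e, he⟩ := exists_addEquiv_of_isOrthonormal
    ⟨horth, fun i => by rw [β_self, hκ, hc]⟩ hspan
  exact ⟨e, fun x => by rw [he]; simp only [hκ]⟩

lemma β_eq_zero_of_forall_orthogonal {v y : G} (hvv : E.β v v = 1) (hyv : E.β y v = 0)
    (h : ∀ w, E.β v w = 0 → E.β y w = 0) (x : G) : E.β y x = 0 := by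
  by_cases hx : E.β v x = 0
  · exact h x hx
  · have hxv : E.β v (x + v) = 0 := by
      rw [E.β_add_right, ZMod.eq_one_of_ne_zero hx, hvv]; decide
    have := h _ hxv
    rwa [E.β_add_right, hyv, add_zero] at this

lemma exists_β_eq_one_of_orthogonal {x₁ y : G} (hx₁ : E.β x₁ x₁ = 1) (hy : E.β x₁ y = 0)
    (hy0 : y ≠ 0) : ∃ z, E.β x₁ z = 0 ∧ E.β y z = 1 := by
  obtain ⟨z, hz⟩ := E.exists_β_eq_one hy0
  by_cases h : E.β x₁ z = 0
  · exact ⟨z, h, hz⟩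
  · refine ⟨z + x₁, ?_, ?_⟩
    · rw [E.β_add_right, ZMod.eq_one_of_ne_zero h, hx₁]; decide
    · rw [E.β_add_right, hz, E.β_comm, hy, add_zero]

lemma κ_eq_one_of_orthogonal {x₁ : G} (hno : ∀ v, E.κ v ≠ 3) (hx₁ : E.κ x₁ = 1) {y : G}
    (hy : E.β x₁ y = 0) (hy0 : y ≠ 0) : E.κ y = 1 := by
  have h01 (w : G) (hw : E.β x₁ w = 0) : E.κ w = 0 ∨ E.κ w = 1 := by
    have h2 : E.κ w ≠ 2 := fun h =>
      hno (x₁ + w) (by rw [E.κ_add_of_β_eq_zero hw, hx₁, h]; decide)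
    have h3 := hno w
    revert h2 h3
    generalize E.κ w = k
    revert k
    decide
  refine (h01 y hy).resolve_left fun hy' => ?_
  obtain ⟨z, hz, hyz⟩ := E.exists_β_eq_one_of_orthogonal (by rw [β_self, hx₁, map_one]) hy hy0
  have hyz' : E.β x₁ (y + z) = 0 := by rw [E.β_add_right, hy, hz, add_zero]
  have hsum := E.κ_add_of_β_eq_one hyz
  rw [hy'] at hsum
  rcases h01 z hz with h | h <;> rcases h01 _ hyz' with h' | h' <;>
    rw [hsum, h] at h' <;> exact absurd h' (by decide)

lemma eq_of_orthogonal {x₁ : G} (hno : ∀ v, E.κ v ≠ 3) (hx₁ : E.κ x₁ = 1) {y z : G}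
    (hy : E.β x₁ y = 0) (hz : E.β x₁ z = 0) (hy0 : y ≠ 0) (hz0 : z ≠ 0) : y = z := by
  by_contra hyz
  have hsum := E.κ_add y z
  rw [E.κ_eq_one_of_orthogonal hno hx₁ hy hy0, E.κ_eq_one_of_orthogonal hno hx₁ hz hz0,
    E.κ_eq_one_of_orthogonal hno hx₁ (by rw [E.β_add_right, hy, hz, add_zero])
      (mt E.add_eq_zero_iff.1 hyz)] at hsum
  revert hsum
  generalize E.β y z = t
  revert t
  decide

theorem exists_κ_eq_three (hodd : ∃ x, E.β x x = 1) (h1 : ¬ E.IsDiagonal 1 1)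
    (h2 : ¬ E.IsDiagonal 2 1) : ∃ v, E.κ v = 3 := by
  by_contra! hno
  obtain ⟨x₁, hx₁⟩ : ∃ x₁, E.κ x₁ = 1 := by
    obtain ⟨x, hx⟩ := hodd
    refine ⟨x, ?_⟩
    have h3 := hno x
    rw [β_self] at hx
    revert hx h3
    generalize E.κ x = k
    revert k
    decide
  by_cases hH : ∃ y, E.β x₁ y = 0 ∧ y ≠ 0
  · obtain ⟨y, hy, hy0⟩ := hH
    refine h2 (E.isDiagonal_of_orthogonal (map_one _) ![x₁, y] ?_ ?_ fun x hx => ?_)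
    · intro i j hij
      fin_cases i <;> fin_cases j <;> simp_all [E.β_comm y]
    · intro i
      fin_cases i
      exacts [hx₁, E.κ_eq_one_of_orthogonal hno hx₁ hy hy0]
    · by_contra hx0
      have hyx : E.β y x = 0 := hx 1
      rw [← E.eq_of_orthogonal hno hx₁ (hx 0) hy hx0 hy0, β_self,
        E.κ_eq_one_of_orthogonal hno hx₁ (hx 0) hx0, map_one] at hyx
      exact one_ne_zero hyx
  · push Not at hH
    exact h1 (E.isDiagonal_of_orthogonal (map_one _) ![x₁] Subsingleton.pairwise
      (fun i => by simpa [Fin.fin_one_eq_zero i] using hx₁) fun x hx => hH x (hx 0))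

def IsCharacteristic (v : G) : Prop := ∀ x, E.β v x = red (E.κ x)

variable {E} in
lemma IsCharacteristic.eq {v w : G} (hv : E.IsCharacteristic v) (hw : E.IsCharacteristic w) :
    v = w :=
  E.add_eq_zero_iff.1 <| E.β_nondegenerate _ fun x => by
    rw [E.β_add_left, hv, hw, CharTwo.add_self_eq_zero]

lemma κ_eq_two_of_orthogonal {v : G} (hchar : ∀ w, E.κ w = 3 → E.IsCharacteristic w)
    (hv : E.κ v = 3) {y : G} (hy : E.β v y = 0) (hy0 : y ≠ 0) : E.κ y = 2 := by
  have hred : red (E.κ y) = 0 := (hchar v hv y).symm.trans hy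
  have h0 : E.κ y ≠ 0 := fun h => hy0 <| add_eq_left.1 <|
    (hchar _ (by rw [E.κ_add_of_β_eq_zero hy, hv, h, add_zero])).eq (hchar v hv)
  revert hred h0
  generalize E.κ y = k
  revert k
  decide

lemma β_eq_one_of_orthogonal {v : G} (hchar : ∀ w, E.κ w = 3 → E.IsCharacteristic w)
    (hv : E.κ v = 3) {y z : G} (hy : E.β v y = 0) (hz : E.β v z = 0) (hy0 : y ≠ 0)
    (hz0 : z ≠ 0) (hyz : y ≠ z) : E.β y z = 1 := by
  have hsum := E.κ_add y z
  rw [E.κ_eq_two_of_orthogonal hchar hv hy hy0, E.κ_eq_two_of_orthogonal hchar hv hz hz0,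
    E.κ_eq_two_of_orthogonal hchar hv (by rw [E.β_add_right, hy, hz, add_zero])
      (mt E.add_eq_zero_iff.1 hyz)] at hsum
  revert hsum
  generalize E.β y z = t
  revert t
  decide

lemma exists_orthogonal_ne {v : G} (hchar : ∀ w, E.κ w = 3 → E.IsCharacteristic w)
    (hv : E.κ v = 3) {y : G} (hy : E.β v y = 0) (hy0 : y ≠ 0) :
    ∃ z, E.β v z = 0 ∧ z ≠ 0 ∧ z ≠ y := by
  by_contra! h
  refine hy0 (E.β_nondegenerate y (E.β_eq_zero_of_forall_orthogonal (by rw [β_self, hv]; decide)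
    (by rw [E.β_comm, hy]) fun w hw => ?_))
  by_cases hw0 : w = 0
  · rw [hw0, β_zero_right]
  · rw [h w hw hw0, β_self, E.κ_eq_two_of_orthogonal hchar hv hy hy0]
    decide

lemma eq_zero_or_eq_or_eq_or_eq_add {v : G} (hchar : ∀ w, E.κ w = 3 → E.IsCharacteristic w)
    (hv : E.κ v = 3) {y z w : G} (hy : E.β v y = 0) (hz : E.β v z = 0) (hw : E.β v w = 0)
    (hy0 : y ≠ 0) (hz0 : z ≠ 0) (hyz : y ≠ z) : w = 0 ∨ w = y ∨ w = z ∨ w = y + z := by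
  by_contra! h
  obtain ⟨hw0, hwy, hwz, hwyz⟩ := h
  have hsum := E.β_add_right w y z
  rw [E.β_eq_one_of_orthogonal hchar hv hw hy hw0 hy0 hwy,
    E.β_eq_one_of_orthogonal hchar hv hw hz hw0 hz0 hwz,
    E.β_eq_one_of_orthogonal hchar hv hw (by rw [E.β_add_right, hy, hz, add_zero]) hw0
      (mt E.add_eq_zero_iff.1 hyz) hwyz] at hsum
  exact absurd hsum (by decide)

lemma isDiagonal_three_one {v : G} (hchar : ∀ w, E.κ w = 3 → E.IsCharacteristic w)
    (hv : E.κ v = 3) {y z : G} (hy : E.β v y = 0) (hz : E.β v z = 0)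
    (hy0 : y ≠ 0) (hz0 : z ≠ 0) (hyz : y ≠ z) : E.IsDiagonal 3 1 := by
  have hvv : E.β v v = 1 := by rw [β_self, hv]; decide
  set b : Fin 3 → G := ![y, z, y + z]
  have hb (i : Fin 3) : E.β v (b i) = 0 ∧ b i ≠ 0 := by
    fin_cases i
    exacts [⟨hy, hy0⟩, ⟨hz, hz0⟩,
      ⟨by simp [b, E.β_add_right, hy, hz], mt E.add_eq_zero_iff.1 hyz⟩]
  have hbinj : Function.Injective b := by
    intro i j h
    fin_cases i <;> fin_cases j <;> simp_all [b, eq_comm]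
  refine E.isDiagonal_of_orthogonal (map_one _) (fun i => v + b i) (fun i j hij => ?_)
    (fun i => ?_) fun x hx => ?_
  · change E.β (v + b i) (v + b j) = 0
    rw [E.β_add_left, E.β_add_right, E.β_add_right, hvv, (hb j).1, E.β_comm (b i), (hb i).1,
      E.β_eq_one_of_orthogonal hchar hv (hb i).1 (hb j).1 (hb i).2 (hb j).2 (hbinj.ne hij)]
    decide
  · rw [E.κ_add_of_β_eq_zero (hb i).1, hv, E.κ_eq_two_of_orthogonal hchar hv (hb i).1 (hb i).2]
    decide
  · have hvy : E.β (v + y) x = 0 := hx 0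
    have hvz : E.β (v + z) x = 0 := hx 1
    have hvyz : E.β (v + (y + z)) x = 0 := hx 2
    have hyx : E.β y x = 0 := by
      rwa [show v + (y + z) = v + z + y by abel, E.β_add_left, hvz, zero_add] at hvyz
    have hzx : E.β z x = 0 := by
      rwa [show v + (y + z) = v + y + z by abel, E.β_add_left, hvy, zero_add] at hvyz
    have hvx : E.β v x = 0 := by rwa [E.β_add_left, hyx, add_zero] at hvy
    refine E.β_nondegenerate x (E.β_eq_zero_of_forall_orthogonal hvv (by rw [E.β_comm, hvx])
      fun w hw => ?_)
    rcases E.eq_zero_or_eq_or_eq_or_eq_add hchar hv hy hz hw hy0 hz0 hyz with rfl | rfl | rfl | rfl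
    · exact E.β_zero_right x
    · rw [E.β_comm, hyx]
    · rw [E.β_comm, hzx]
    · rw [E.β_add_right, E.β_comm, hyx, E.β_comm, hzx, add_zero]

theorem exists_not_isCharacteristic {v : G} (hv : E.κ v = 3) (h1 : ¬ E.IsDiagonal 1 3)
    (h3 : ¬ E.IsDiagonal 3 1) : ∃ w, E.κ w = 3 ∧ ¬ E.IsCharacteristic w := by
  by_contra! hchar
  by_cases hK : ∃ y, E.β v y = 0 ∧ y ≠ 0
  · obtain ⟨y, hy, hy0⟩ := hK
    obtain ⟨z, hz, hz0, hzy⟩ := E.exists_orthogonal_ne hchar hv hy hy0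
    exact h3 (E.isDiagonal_three_one hchar hv hy hz hy0 hz0 hzy.symm)
  · push Not at hK
    exact h1 (E.isDiagonal_of_orthogonal (by decide) ![v] Subsingleton.pairwise
      (fun i => by simpa [Fin.fin_one_eq_zero i] using hv) fun x hx => hK x (hx 0))

end EnhancedForm

theorem EnhancedForm.exists_of_refinement {G : Type*} [AddCommGroup G]
    (h2 : ∀ x : G, x + x = 0) (b : G → G → AddCircle (1 : ℚ))
    (hbil : ∀ x y z : G, b (x + y) z = b x z + b y z) (hsym : ∀ x y : G, b x y = b y x)
    (hnd : ∀ x : G, (∀ y : G, b x y = 0) → x = 0) (q : G → AddCircle (2 : ℚ))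
    (hq1 : ∀ x y : G, q (x + y) = q x + q y + dbl (b x y)) :
    ∃ E : EnhancedForm G, (∀ x y, b x y = half₂ (E.β x y)) ∧ ∀ x, q x = half₄ (E.κ x) := by
  have hb0 (y : G) : b 0 y = 0 := by simpa using hbil 0 0 y
  have hq0 : q 0 = 0 := by simpa [hb0] using hq1 0 0
  have hb2 (x y : G) : 2 • b x y = 0 := by rw [two_nsmul, ← hbil, h2, hb0]
  have hq4 (x : G) : 4 • q x = 0 := by
    have h : q x + q x = -dbl (b x x) := by
      have := hq1 x x
      rw [h2, hq0] at this
      exact eq_neg_of_add_eq_zero_left this.symm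
    rw [show 4 = 2 * 2 from rfl, mul_nsmul, two_nsmul (q x), h, smul_neg, ← map_nsmul, hb2,
      map_zero, neg_zero]
  choose β hβ using fun x y => ZMod.exists_halfHom_eq (n := 2) (p := 1) (by norm_num) (hb2 x y)
  choose κ hκ using fun x => ZMod.exists_halfHom_eq (n := 4) (p := 2) (by norm_num) (hq4 x)
  have hβ' (x y : G) : b x y = half₂ (β x y) := (hβ x y).symm
  have hκ' (x : G) : q x = half₄ (κ x) := (hκ x).symm
  refine ⟨⟨β, κ, fun x y z => half₂_injective ?_, fun x y => half₂_injective ?_,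
    fun x hx => hnd x fun y => ?_, fun x y => half₄_injective ?_⟩, hβ', hκ'⟩
  · rw [map_add, ← hβ', ← hβ', ← hβ', hbil]
  · rw [← hβ', ← hβ', hsym]
  · rw [hβ', hx, map_zero]
  · rw [map_add, map_add, ← dbl_half₂, ← hβ', ← hκ', ← hκ', ← hκ', hq1]

namespace EnhancedForm.IsDiagonal

variable {G : Type*} [AddCommGroup G] {E : EnhancedForm G} {n : ℕ} {c : ZMod 4}
  {q : G → AddCircle (2 : ℚ)} {r : ℚ}

lemma exists_addEquiv (hE : E.IsDiagonal n c) (hq : ∀ x, q x = half₄ (E.κ x)) (hr : half₄ c = r) :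
    ∃ e : G ≃+ (Fin n → ZMod 2),
      ∀ x, q x = (((∑ i, if e x i = 0 then (0 : ℚ) else r) : ℚ) : AddCircle (2 : ℚ)) := by
  obtain ⟨e, he⟩ := hE
  refine ⟨e, fun x => ?_⟩
  rw [hq, he, map_sum, ← QuotientAddGroup.mk'_apply, map_sum]
  refine Finset.sum_congr rfl fun i _ => ?_
  split_ifs <;> simp [hr]

lemma exists_addEquiv_zmod (hE : E.IsDiagonal 1 c) (hq : ∀ x, q x = half₄ (E.κ x))
    (hr : half₄ c = r) :
    ∃ e : G ≃+ ZMod 2, ∀ x, q x = (((if e x = 0 then (0 : ℚ) else r) : ℚ) : AddCircle (2 : ℚ)) := by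
  obtain ⟨e, he⟩ := hE.exists_addEquiv hq hr
  exact ⟨e.trans (AddEquiv.funUnique (Fin 1) (ZMod 2)), fun x => by simp [he]⟩

end EnhancedForm.IsDiagonal

theorem stmt16_general {G : Type*} [AddCommGroup G]
    (h2 : ∀ x : G, x + x = 0)
    (b : G → G → AddCircle (1 : ℚ))
    (hbil : ∀ x y z : G, b (x + y) z = b x z + b y z)
    (hsym : ∀ x y : G, b x y = b y x)
    (hnd : ∀ x : G, (∀ y : G, b x y = 0) → x = 0)
    (q : G → AddCircle (2 : ℚ))
    (hq1 : ∀ x y : G, q (x + y) = q x + q y + dbl (b x y))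
    (hodd : ∃ x : G, ¬ ∃ k : ℤ, q x = ((k : ℚ) : AddCircle (2 : ℚ)))
    (hnotstd : ¬ ∃ n : ℕ, n ≤ 3 ∧ ∃ e : G ≃+ (Fin n → ZMod 2),
      ∀ x : G, q x = (((∑ i, if e x i = 0 then (0 : ℚ) else 1 / 2) : ℚ) : AddCircle (2 : ℚ))) :
    (∃ v : G, q v = ((-(1 / 2) : ℚ) : AddCircle (2 : ℚ))) ∧
    ((¬ ∃ e : G ≃+ ZMod 2,
        ∀ x : G, q x = (((if e x = 0 then (0 : ℚ) else -(1 / 2)) : ℚ) : AddCircle (2 : ℚ))) →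
      ∃ v : G, q v = ((-(1 / 2) : ℚ) : AddCircle (2 : ℚ)) ∧
        ¬ (∀ x : G, b v x = redmap (q x))) := by
  obtain ⟨E, hb, hq⟩ := EnhancedForm.exists_of_refinement h2 b hbil hsym hnd q hq1
  have hdiag (n : ℕ) (hn : n ≤ 3) : ¬ E.IsDiagonal n 1 :=
    fun hE => hnotstd ⟨n, hn, hE.exists_addEquiv hq half₄_one⟩
  have hodd' : ∃ x, E.β x x = 1 := by
    obtain ⟨x, hx⟩ := hodd
    refine ⟨x, ZMod.eq_one_of_ne_zero fun h0 => hx ?_⟩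
    rw [hq]
    exact exists_half₄_eq_intCast (E.β_self x ▸ h0)
  have hq3 (w : G) (hw : E.κ w = 3) : q w = ((-(1 / 2) : ℚ) : AddCircle (2 : ℚ)) := by
    rw [hq, hw, half₄_three]
  obtain ⟨v, hv⟩ := E.exists_κ_eq_three hodd' (hdiag 1 (by norm_num)) (hdiag 2 (by norm_num))
  refine ⟨⟨v, hq3 v hv⟩, fun hne => ?_⟩
  obtain ⟨w, hw, hwc⟩ := E.exists_not_isCharacteristic hv
    (fun hE => hne (hE.exists_addEquiv_zmod hq half₄_three)) (hdiag 3 le_rfl)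
  refine ⟨w, hq3 w hw, fun h => hwc fun x => half₂_injective ?_⟩
  rw [← hb, h, hq, redmap_half₄]

/-- Let `(G, q)` be an elementary enhanced 2-group with odd quadratic refinement which
is not isomorphic to `n⟨1/2⟩` for `n ≤ 3`.  Then there is `v ∈ G` with `q(v) = -1/2`;
if moreover `G ≠ ⟨-1/2⟩`, such a `v` can be chosen non-characteristic. -/
theorem stmt16 {G : Type*} [AddCommGroup G] [Fintype G]
    (h2 : ∀ x : G, x + x = 0)
    (b : G → G → AddCircle (1 : ℚ))
    (hbil : ∀ x y z : G, b (x + y) z = b x z + b y z)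
    (hsym : ∀ x y : G, b x y = b y x)
    (hnd : ∀ x : G, (∀ y : G, b x y = 0) → x = 0)
    (q : G → AddCircle (2 : ℚ))
    (hq1 : ∀ x y : G, q (x + y) = q x + q y + dbl (b x y))
    (hq2 : ∀ (n : ℤ) (x : G), q (n • x) = n ^ 2 • q x)
    (hodd : ∃ x : G, ¬ ∃ k : ℤ, q x = ((k : ℚ) : AddCircle (2 : ℚ)))
    (hnotstd : ¬ ∃ n : ℕ, n ≤ 3 ∧ ∃ e : G ≃+ (Fin n → ZMod 2),
      ∀ x : G, q x = (((∑ i, if e x i = 0 then (0 : ℚ) else 1 / 2) : ℚ) : AddCircle (2 : ℚ))) :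
    (∃ v : G, q v = ((-(1 / 2) : ℚ) : AddCircle (2 : ℚ))) ∧
    ((¬ ∃ e : G ≃+ ZMod 2,
        ∀ x : G, q x = (((if e x = 0 then (0 : ℚ) else -(1 / 2)) : ℚ) : AddCircle (2 : ℚ))) →
      ∃ v : G, q v = ((-(1 / 2) : ℚ) : AddCircle (2 : ℚ)) ∧
        ¬ (∀ x : G, b v x = redmap (q x))) :=
  stmt16_general h2 b hbil hsym hnd q hq1 hodd hnotstd
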